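/- (Lemma 1.) Let n > 3 be an integer, let v be the divergence-conforming B-spline velocity field of order 3 with coefficients φ^X, φ^Y, φ^Z, let M be a nonempty subset of [0,1]³, and let ε ≥ 0. Let J_M be the set of indices i = (i_X,i_Y,i_Z) ∈ {−2,…,n−1}³ such that the product of supports (i_X/n, (i_X+3)/n) × (i_Y/n, (i_Y+3)/n) × (i_Z/n, (i_Z+3)/n) intersects M. If for every i ∈ J_M the quantity |n·(φ^X(i_X,i_Y,i_Z) − φ^X(i_X−1,i_Y,i_Z)) + n·(φ^Y(i_X,i_Y,i_Z) − φ^Y(i_X,i_Y−1,i_Z)) + n·(φ^Z(i_X,i_Y,i_Z) − φ^Z(i_X,i_Y,i_Z−1))| is at most ε, then for every point m ∈ M the divergence of v at m satisfies |div v(m)| ≤ ε. -/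

import Mathlib

/-- The quadratic uniform B-spline. -/
noncomputable def B2 (t : ℝ) : ℝ :=
  if |t| ≤ 1/2 then 3/4 - t^2
  else if |t| ≤ 3/2 then (1/2) * (3/2 - |t|)^2
  else 0

/-- The cubic uniform B-spline. -/
noncomputable def B3 (t : ℝ) : ℝ :=
  if |t| ≤ 1 then (1/6) * (4 - 3*t^2*(2 - |t|))
  else if |t| ≤ 2 then (1/6) * (2 - |t|)^3
  else 0

/-- Order-2 shifted basis function at knot index `j` on the uniform grid of spacing `1/n`. -/
noncomputable def B2j (n : ℤ) (j : ℤ) (u : ℝ) : ℝ :=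
  B2 ((n : ℝ) * u - (j : ℝ) - 3/2)

/-- Order-3 shifted basis function at knot index `j` on the uniform grid of spacing `1/n`. -/
noncomputable def B3j (n : ℤ) (j : ℤ) (u : ℝ) : ℝ :=
  B3 ((n : ℝ) * u - (j : ℝ) - 2)

/-- First component of the divergence-conforming B-spline velocity field of order 3. -/
noncomputable def vX (n : ℤ) (φ : ℤ → ℤ → ℤ → ℝ) (x y z : ℝ) : ℝ :=
  ∑ iX ∈ Finset.Icc (-3 : ℤ) (n-1), ∑ iY ∈ Finset.Icc (-2 : ℤ) (n-1),
    ∑ iZ ∈ Finset.Icc (-2 : ℤ) (n-1),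
      B3j n iX x * B2j n iY y * B2j n iZ z * φ iX iY iZ

/-- Second component of the divergence-conforming B-spline velocity field of order 3. -/
noncomputable def vY (n : ℤ) (φ : ℤ → ℤ → ℤ → ℝ) (x y z : ℝ) : ℝ :=
  ∑ iX ∈ Finset.Icc (-2 : ℤ) (n-1), ∑ iY ∈ Finset.Icc (-3 : ℤ) (n-1),
    ∑ iZ ∈ Finset.Icc (-2 : ℤ) (n-1),
      B2j n iX x * B3j n iY y * B2j n iZ z * φ iX iY iZ

/-- Third component of the divergence-conforming B-spline velocity field of order 3. -/
noncomputable def vZ (n : ℤ) (φ : ℤ → ℤ → ℤ → ℝ) (x y z : ℝ) : ℝ :=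
  ∑ iX ∈ Finset.Icc (-2 : ℤ) (n-1), ∑ iY ∈ Finset.Icc (-2 : ℤ) (n-1),
    ∑ iZ ∈ Finset.Icc (-3 : ℤ) (n-1),
      B2j n iX x * B2j n iY y * B3j n iZ z * φ iX iY iZ

/-- The divergence `∂vX/∂x + ∂vY/∂y + ∂vZ/∂z` of the divergence-conforming B-spline
velocity field at a point `(x, y, z)`. -/
noncomputable def divv (n : ℤ) (φX φY φZ : ℤ → ℤ → ℤ → ℝ) (p : ℝ × ℝ × ℝ) : ℝ :=
  deriv (fun x' : ℝ => vX n φX x' p.2.1 p.2.2) p.1 +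
  deriv (fun y' : ℝ => vY n φY p.1 y' p.2.2) p.2.1 +
  deriv (fun z' : ℝ => vZ n φZ p.1 p.2.1 z') p.2.2

/-!
The uniform B-splines are divided differences of truncated powers: `B2` of `max t 0 ^ 2`, `B3` of
`max t 0 ^ 3` with one more difference, which gives `B3' t = B2 (t + 1/2) - B2 (t - 1/2)` and
`∂ₓ B3j n i = n (B2j n i - B2j n (i + 1))`. On `[0, 1]` the extreme quadratic basis functions
`B2j n (-3)` and `B2j n n` vanish, so summation by parts produces no boundary terms and turns
`∂ₓ vX` into the quadratic tensor-product spline with coefficients `n (φX i - φX (i - eₓ))`;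
likewise for `y` and `z`. Hence `div v` is the quadratic spline whose coefficients are the discrete
divergences. Its basis functions are nonnegative, sum to at most one, and at `m` only those whose
support box contains `m` are nonzero, so `|div v (m)|` is at most the largest discrete divergence
over `J_M`.
-/

open Finset

lemma B2_nonneg (t : ℝ) : 0 ≤ B2 t := by
  unfold B2
  split_ifs
  · nlinarith [sq_abs t, abs_nonneg t]
  · positivity
  · rfl

lemma B2_eq_zero_of_le_abs {t : ℝ} (h : 3/2 ≤ |t|) : B2 t = 0 := by
  unfold B2
  split_ifs with h1 h2
  · linarith
  · rw [le_antisymm h2 h]; norm_num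
  · rfl

lemma abs_lt_of_B2_ne_zero {t : ℝ} (h : B2 t ≠ 0) : |t| < 3/2 :=
  not_le.mp (mt B2_eq_zero_of_le_abs h)

/- With `max_def'` for `t < 0` and `max_def` for `t > 0`, every breakpoint of the truncated powers
falls on the same side as in the `if`s of the spline, so no case degenerates to a single point. -/
lemma B2_eq_truncatedPower (t : ℝ) : B2 t = (1/2) * (max (t + 3/2) 0 ^ 2
    - 3 * max (t + 1/2) 0 ^ 2 + 3 * max (t - 1/2) 0 ^ 2 - max (t - 3/2) 0 ^ 2) := by
  unfold B2
  obtain ht | rfl | ht := lt_trichotomy t 0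
  · rw [abs_of_neg ht]
    split_ifs <;> simp only [max_def'] <;> split_ifs <;> first | (exfalso; linarith) | ring1
  · norm_num
  · rw [abs_of_pos ht]
    split_ifs <;> simp only [max_def] <;> split_ifs <;> first | (exfalso; linarith) | ring1

lemma B3_eq_truncatedPower (t : ℝ) : B3 t = (1/6) * (max (t + 2) 0 ^ 3 - 4 * max (t + 1) 0 ^ 3
    + 6 * max t 0 ^ 3 - 4 * max (t - 1) 0 ^ 3 + max (t - 2) 0 ^ 3) := by
  unfold B3
  obtain ht | rfl | ht := lt_trichotomy t 0
  · rw [abs_of_neg ht]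
    split_ifs <;> simp only [max_def'] <;> split_ifs <;> first | (exfalso; linarith) | ring1
  · norm_num
  · rw [abs_of_pos ht]
    split_ifs <;> simp only [max_def] <;> split_ifs <;> first | (exfalso; linarith) | ring1

lemma max_zero_pow_three_eq (x : ℝ) : max x 0 ^ 3 = (x ^ 3 + |x| ^ (3:ℝ)) / 2 := by
  rw [show (3:ℝ) = ((3:ℕ):ℝ) by norm_num, Real.rpow_natCast]
  rcases le_total 0 x with hx | hx
  · rw [max_eq_left hx, abs_of_nonneg hx]; ring
  · rw [max_eq_right hx, abs_of_nonpos hx]; ring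

lemma hasDerivAt_max_zero_pow_three (t : ℝ) :
    HasDerivAt (fun x : ℝ => max x 0 ^ 3) (3 * max t 0 ^ 2) t := by
  rw [funext max_zero_pow_three_eq]
  refine ((hasDerivAt_pow 3 t).fun_add
    (hasDerivAt_abs_rpow t (p := 3) (by norm_num))).div_const 2 |>.congr_deriv ?_
  norm_num
  rcases le_total 0 t with ht | ht
  · rw [max_eq_left ht, abs_of_nonneg ht]; ring
  · rw [max_eq_right ht, abs_of_nonpos ht]; ring

lemma hasDerivAt_B3 (t : ℝ) : HasDerivAt B3 (B2 (t + 1/2) - B2 (t - 1/2)) t := by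
  have hp := hasDerivAt_max_zero_pow_three
  rw [funext B3_eq_truncatedPower]
  refine (((((hp _).comp_add_const t 2).fun_sub (((hp _).comp_add_const t 1).const_mul 4)).fun_add
    ((hp t).const_mul 6)).fun_sub (((hp _).comp_sub_const t 1).const_mul 4)).fun_add
    ((hp _).comp_sub_const t 2) |>.const_mul (1/6) |>.congr_deriv ?_
  rw [B2_eq_truncatedPower, B2_eq_truncatedPower]
  ring_nf

lemma B2_add_one_add_B2_add_B2_sub_one {u : ℝ} (hu : |u| ≤ 1/2) :
    B2 (u + 1) + B2 u + B2 (u - 1) = 1 := by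
  obtain ⟨hlo, hhi⟩ := abs_le.mp hu
  simp (disch := grind) only [B2_eq_truncatedPower, max_eq_left, max_eq_right]
  ring

lemma sum_B2_sub_le_one (S : Finset ℤ) (t : ℝ) : ∑ j ∈ S, B2 (t - j) ≤ 1 := by
  set k := round t
  have hsupp : ∀ j ∈ S, B2 (t - j) ≠ 0 → j ∈ ({k - 1, k, k + 1} : Finset ℤ) := by
    intro j _ hj
    have hj := abs_lt.mp (abs_lt_of_B2_ne_zero hj)
    have hk := abs_le.mp (abs_sub_round t)
    have hlo : k - 2 < j := by
      rw [← Int.cast_lt (R := ℝ)]; push_cast; linarith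
    have hhi : j < k + 2 := by
      rw [← Int.cast_lt (R := ℝ)]; push_cast; linarith
    simp only [mem_insert, mem_singleton]
    omega
  calc ∑ j ∈ S, B2 (t - j) = ∑ j ∈ S with j ∈ ({k - 1, k, k + 1} : Finset ℤ), B2 (t - j) :=
        (sum_filter_of_ne hsupp).symm
    _ ≤ ∑ j ∈ ({k - 1, k, k + 1} : Finset ℤ), B2 (t - j) :=
        sum_le_sum_of_subset_of_nonneg (fun j hj => (mem_filter.mp hj).2)
          fun j _ _ => B2_nonneg _
    _ = B2 ((t - k) + 1) + B2 (t - k) + B2 ((t - k) - 1) := by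
        rw [sum_insert (by simp; omega), sum_insert (by simp), sum_singleton]
        push_cast; ring_nf
    _ = 1 := B2_add_one_add_B2_add_B2_sub_one (abs_sub_round t)

lemma B2j_nonneg (n j : ℤ) (u : ℝ) : 0 ≤ B2j n j u := B2_nonneg _

lemma sum_B2j_le_one (n : ℤ) (S : Finset ℤ) (u : ℝ) : ∑ j ∈ S, B2j n j u ≤ 1 := by
  convert sum_B2_sub_le_one S (n * u - 3/2) using 3
  unfold B2j; ring_nf

lemma mem_Ioo_of_B2j_ne_zero {n : ℤ} (hn : 0 < n) {j : ℤ} {u : ℝ} (h : B2j n j u ≠ 0) :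
    u ∈ Set.Ioo ((j : ℝ) / n) ((j + 3) / n) := by
  have hn' : (0 : ℝ) < n := by exact_mod_cast hn
  obtain ⟨hlo, hhi⟩ := abs_lt.mp (abs_lt_of_B2_ne_zero h)
  constructor
  · rw [div_lt_iff₀ hn']; linarith
  · rw [lt_div_iff₀ hn']; linarith

lemma B2j_neg_three_eq_zero {n : ℤ} (hn : 0 < n) {u : ℝ} (hu : 0 ≤ u) : B2j n (-3) u = 0 := by
  have : (0 : ℝ) ≤ n * u := mul_nonneg (by exact_mod_cast hn.le) hu
  apply B2_eq_zero_of_le_abs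
  rw [abs_of_nonneg (by push_cast; linarith)]
  push_cast; linarith

lemma B2j_self_eq_zero {n : ℤ} (hn : 0 < n) {u : ℝ} (hu : u ≤ 1) : B2j n n u = 0 := by
  have : (n : ℝ) * u ≤ n := mul_le_of_le_one_right (by exact_mod_cast hn.le) hu
  apply B2_eq_zero_of_le_abs
  rw [abs_of_nonpos (by linarith)]
  linarith

lemma hasDerivAt_B3j (n j : ℤ) (u : ℝ) :
    HasDerivAt (B3j n j) (n * (B2j n j u - B2j n (j + 1) u)) u := by
  have hin : HasDerivAt (fun u' : ℝ => n * u' - j - 2) n u := by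
    simpa using ((hasDerivAt_id u).const_mul (n : ℝ)).sub_const ((j : ℝ) + 2)
  refine (hasDerivAt_B3 _).comp u hin |>.congr_deriv ?_
  unfold B2j
  push_cast
  ring_nf

lemma sum_Icc_sub_mul_eq_sum_mul_sub {R : Type*} [Ring R] {a b : ℤ} {f g : ℤ → R}
    (ha : f a = 0) (hb : f (b + 1) = 0) :
    ∑ i ∈ Icc a b, (f i - f (i + 1)) * g i = ∑ i ∈ Icc (a + 1) b, f i * (g i - g (i - 1)) := by
  have h₁ : ∑ i ∈ Icc (a + 1) b, f i * g i = ∑ i ∈ Icc a b, f i * g i :=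
    sum_subset (Icc_subset_Icc_left (by omega)) fun i hi hi' => by
      obtain rfl : i = a := by simp only [mem_Icc] at hi hi'; omega
      rw [ha, zero_mul]
  have h₂ : ∑ i ∈ Icc (a + 1) b, f i * g (i - 1) = ∑ i ∈ Icc a b, f (i + 1) * g i :=
    calc ∑ i ∈ Icc (a + 1) b, f i * g (i - 1)
        = ∑ i ∈ Icc (a + 1) (b + 1), f i * g (i - 1) :=
          sum_subset (Icc_subset_Icc_right (by omega)) fun i hi hi' => by
            obtain rfl : i = b + 1 := by simp only [mem_Icc] at hi hi'; omega
            rw [hb, zero_mul]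
      _ = ∑ i ∈ Icc a b, f (i + 1) * g i := by
          rw [← map_add_right_Icc, sum_map]
          simp only [addRightEmbedding_apply, add_sub_cancel_right]
  simp only [sub_mul, mul_sub, sum_sub_distrib, h₁, h₂]

lemma hasDerivAt_sum_B3j_mul {n : ℤ} (hn : 0 < n) (c : ℤ → ℝ) {x : ℝ} (hx : x ∈ Set.Icc 0 1) :
    HasDerivAt (fun x' => ∑ i ∈ Icc (-3) (n - 1), B3j n i x' * c i)
      (∑ i ∈ Icc (-2) (n - 1), B2j n i x * (n * (c i - c (i - 1)))) x := by
  refine HasDerivAt.fun_sum (fun i _ => (hasDerivAt_B3j n i x).mul_const (c i)) |>.congr_deriv ?_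
  have h := sum_Icc_sub_mul_eq_sum_mul_sub (f := fun i => B2j n i x) (g := fun i => n * c i)
    (B2j_neg_three_eq_zero hn hx.1) (by rw [sub_add_cancel]; exact B2j_self_eq_zero hn hx.2)
  convert h using 2 with i
  · ring
  · norm_num
  · ring

noncomputable def quadraticSpline (n : ℤ) (F : ℤ → ℤ → ℤ → ℝ) (x y z : ℝ) : ℝ :=
  ∑ iX ∈ Icc (-2) (n - 1), B2j n iX x * ∑ iY ∈ Icc (-2) (n - 1), B2j n iY y *
    ∑ iZ ∈ Icc (-2) (n - 1), B2j n iZ z * F iX iY iZ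

section VelocityDerivatives

variable {n : ℤ} (φ : ℤ → ℤ → ℤ → ℝ)

lemma hasDerivAt_vX (hn : 0 < n) {x : ℝ} (hx : x ∈ Set.Icc 0 1) (y z : ℝ) :
    HasDerivAt (fun x' => vX n φ x' y z)
      (quadraticSpline n (fun i j k => n * (φ i j k - φ (i - 1) j k)) x y z) x := by
  have hv : (fun x' => vX n φ x' y z) = fun x' => ∑ iX ∈ Icc (-3) (n - 1), B3j n iX x' *
      ∑ iY ∈ Icc (-2) (n - 1), B2j n iY y * ∑ iZ ∈ Icc (-2) (n - 1), B2j n iZ z * φ iX iY iZ := by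
    funext x'
    simp only [vX, mul_sum, mul_assoc]
  rw [hv]
  refine (hasDerivAt_sum_B3j_mul hn _ hx).congr_deriv ?_
  simp only [quadraticSpline, mul_sum, ← sum_sub_distrib, ← mul_sub]
  exact sum_congr rfl fun _ _ => sum_congr rfl fun _ _ => sum_congr rfl fun _ _ => by ring

lemma hasDerivAt_vY (hn : 0 < n) (x : ℝ) {y : ℝ} (hy : y ∈ Set.Icc 0 1) (z : ℝ) :
    HasDerivAt (fun y' => vY n φ x y' z)
      (quadraticSpline n (fun i j k => n * (φ i j k - φ i (j - 1) k)) x y z) y := by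
  have hv : (fun y' => vY n φ x y' z) = fun y' => ∑ iX ∈ Icc (-2) (n - 1), B2j n iX x *
      ∑ iY ∈ Icc (-3) (n - 1), B3j n iY y' * ∑ iZ ∈ Icc (-2) (n - 1), B2j n iZ z * φ iX iY iZ := by
    funext y'
    simp only [vY, mul_sum, mul_assoc]
  rw [hv]
  refine (HasDerivAt.fun_sum fun iX _ =>
    (hasDerivAt_sum_B3j_mul hn _ hy).const_mul (B2j n iX x)).congr_deriv ?_
  simp only [quadraticSpline, mul_sum, ← sum_sub_distrib, ← mul_sub]
  exact sum_congr rfl fun _ _ => sum_congr rfl fun _ _ => sum_congr rfl fun _ _ => by ring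

lemma hasDerivAt_vZ (hn : 0 < n) (x y : ℝ) {z : ℝ} (hz : z ∈ Set.Icc 0 1) :
    HasDerivAt (fun z' => vZ n φ x y z')
      (quadraticSpline n (fun i j k => n * (φ i j k - φ i j (k - 1))) x y z) z := by
  have hv : (fun z' => vZ n φ x y z') = fun z' => ∑ iX ∈ Icc (-2) (n - 1), B2j n iX x *
      ∑ iY ∈ Icc (-2) (n - 1), B2j n iY y * ∑ iZ ∈ Icc (-3) (n - 1), B3j n iZ z' * φ iX iY iZ := by
    funext z'
    simp only [vZ, mul_sum, mul_assoc]
  rw [hv]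
  refine (HasDerivAt.fun_sum fun iX _ => HasDerivAt.const_mul (B2j n iX x) <|
    HasDerivAt.fun_sum fun iY _ =>
      (hasDerivAt_sum_B3j_mul hn _ hz).const_mul (B2j n iY y)).congr_deriv ?_
  simp only [quadraticSpline, mul_sum]

end VelocityDerivatives

noncomputable def discreteDivergence (n : ℤ) (φX φY φZ : ℤ → ℤ → ℤ → ℝ) (iX iY iZ : ℤ) : ℝ :=
  n * (φX iX iY iZ - φX (iX - 1) iY iZ) + n * (φY iX iY iZ - φY iX (iY - 1) iZ) +
    n * (φZ iX iY iZ - φZ iX iY (iZ - 1))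

lemma quadraticSpline_add (n : ℤ) (F G : ℤ → ℤ → ℤ → ℝ) (x y z : ℝ) :
    quadraticSpline n F x y z + quadraticSpline n G x y z =
      quadraticSpline n (fun i j k => F i j k + G i j k) x y z := by
  simp only [quadraticSpline, ← sum_add_distrib, ← mul_add]

lemma divv_eq_quadraticSpline {n : ℤ} (hn : 0 < n) (φX φY φZ : ℤ → ℤ → ℤ → ℝ) {x y z : ℝ}
    (hx : x ∈ Set.Icc 0 1) (hy : y ∈ Set.Icc 0 1) (hz : z ∈ Set.Icc 0 1) :
    divv n φX φY φZ (x, y, z) = quadraticSpline n (discreteDivergence n φX φY φZ) x y z := by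
  rw [divv, (hasDerivAt_vX φX hn hx y z).deriv, (hasDerivAt_vY φY hn x hy z).deriv,
    (hasDerivAt_vZ φZ hn x y hz).deriv, quadraticSpline_add, quadraticSpline_add]
  rfl

lemma abs_sum_mul_le_of_sum_le_one {ι : Type*} (s : Finset ι) {w f : ι → ℝ} {ε : ℝ}
    (hw : ∀ i ∈ s, 0 ≤ w i) (hw₁ : ∑ i ∈ s, w i ≤ 1) (hε : 0 ≤ ε)
    (hf : ∀ i ∈ s, w i ≠ 0 → |f i| ≤ ε) : |∑ i ∈ s, w i * f i| ≤ ε :=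
  calc |∑ i ∈ s, w i * f i| ≤ ∑ i ∈ s, |w i * f i| := abs_sum_le_sum_abs _ _
    _ ≤ ∑ i ∈ s, w i * ε := sum_le_sum fun i hi => by
        rw [abs_mul, abs_of_nonneg (hw i hi)]
        by_cases h : w i = 0
        · simp [h]
        · exact mul_le_mul_of_nonneg_left (hf i hi h) (hw i hi)
    _ = (∑ i ∈ s, w i) * ε := (sum_mul _ _ _).symm
    _ ≤ ε := mul_le_of_le_one_left hε hw₁

lemma abs_quadraticSpline_le {n : ℤ} (hn : 0 < n) {F : ℤ → ℤ → ℤ → ℝ} {x y z ε : ℝ} (hε : 0 ≤ ε)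
    (hF : ∀ iX ∈ Icc (-2) (n - 1), ∀ iY ∈ Icc (-2) (n - 1), ∀ iZ ∈ Icc (-2) (n - 1),
      x ∈ Set.Ioo ((iX : ℝ) / n) ((iX + 3) / n) → y ∈ Set.Ioo ((iY : ℝ) / n) ((iY + 3) / n) →
      z ∈ Set.Ioo ((iZ : ℝ) / n) ((iZ + 3) / n) → |F iX iY iZ| ≤ ε) :
    |quadraticSpline n F x y z| ≤ ε := by
  refine abs_sum_mul_le_of_sum_le_one _ (fun j _ => B2j_nonneg n j x) (sum_B2j_le_one ..) hε
    fun iX hiX hX => ?_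
  refine abs_sum_mul_le_of_sum_le_one _ (fun j _ => B2j_nonneg n j y) (sum_B2j_le_one ..) hε
    fun iY hiY hY => ?_
  refine abs_sum_mul_le_of_sum_le_one _ (fun j _ => B2j_nonneg n j z) (sum_B2j_le_one ..) hε
    fun iZ hiZ hZ => ?_
  exact hF iX hiX iY hiY iZ hiZ (mem_Ioo_of_B2j_ne_zero hn hX) (mem_Ioo_of_B2j_ne_zero hn hY)
    (mem_Ioo_of_B2j_ne_zero hn hZ)

theorem lemma1_general (n : ℤ) (hn : 3 < n) (φX φY φZ : ℤ → ℤ → ℤ → ℝ)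
    (M : Set (ℝ × ℝ × ℝ))
    (hMΩ : M ⊆ Set.Icc (0:ℝ) 1 ×ˢ (Set.Icc (0:ℝ) 1 ×ˢ Set.Icc (0:ℝ) 1))
    (ε : ℝ) (hε : 0 ≤ ε)
    (hcon : ∀ iX iY iZ : ℤ, iX ∈ Finset.Icc (-2 : ℤ) (n-1) →
      iY ∈ Finset.Icc (-2 : ℤ) (n-1) → iZ ∈ Finset.Icc (-2 : ℤ) (n-1) →
      ((Set.Ioo ((iX : ℝ)/n) (((iX : ℝ)+3)/n) ×ˢ
        (Set.Ioo ((iY : ℝ)/n) (((iY : ℝ)+3)/n) ×ˢ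
         Set.Ioo ((iZ : ℝ)/n) (((iZ : ℝ)+3)/n))) ∩ M).Nonempty →
      |(n : ℝ) * (φX iX iY iZ - φX (iX - 1) iY iZ) +
       (n : ℝ) * (φY iX iY iZ - φY iX (iY - 1) iZ) +
       (n : ℝ) * (φZ iX iY iZ - φZ iX iY (iZ - 1))| ≤ ε) :
    ∀ m ∈ M, |divv n φX φY φZ m| ≤ ε := by
  rintro ⟨x, y, z⟩ hm
  obtain ⟨hx, hy, hz⟩ := hMΩ hm
  rw [divv_eq_quadraticSpline (by omega) φX φY φZ hx hy hz]
  exact abs_quadraticSpline_le (by omega) hε fun iX hiX iY hiY iZ hiZ hxi hyi hzi =>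
    hcon iX iY iZ hiX hiY hiZ ⟨(x, y, z), ⟨hxi, hyi, hzi⟩, hm⟩

/-- **Lemma 1.** If the scaled finite differences of the coefficients are bounded by `ε`
in absolute value for all indices whose basis-function support box meets `M`, then the
divergence of the velocity field is bounded by `ε` at every point of `M`. -/
theorem lemma1 (n : ℤ) (hn : 3 < n) (φX φY φZ : ℤ → ℤ → ℤ → ℝ)
    (hφX : ∀ iX iY iZ : ℤ,
      ¬(iX ∈ Finset.Icc (-3 : ℤ) (n-1) ∧ iY ∈ Finset.Icc (-2 : ℤ) (n-1) ∧
        iZ ∈ Finset.Icc (-2 : ℤ) (n-1)) → φX iX iY iZ = 0)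
    (hφY : ∀ iX iY iZ : ℤ,
      ¬(iX ∈ Finset.Icc (-2 : ℤ) (n-1) ∧ iY ∈ Finset.Icc (-3 : ℤ) (n-1) ∧
        iZ ∈ Finset.Icc (-2 : ℤ) (n-1)) → φY iX iY iZ = 0)
    (hφZ : ∀ iX iY iZ : ℤ,
      ¬(iX ∈ Finset.Icc (-2 : ℤ) (n-1) ∧ iY ∈ Finset.Icc (-2 : ℤ) (n-1) ∧
        iZ ∈ Finset.Icc (-3 : ℤ) (n-1)) → φZ iX iY iZ = 0)
    (M : Set (ℝ × ℝ × ℝ)) (hM : M.Nonempty)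
    (hMΩ : M ⊆ Set.Icc (0:ℝ) 1 ×ˢ (Set.Icc (0:ℝ) 1 ×ˢ Set.Icc (0:ℝ) 1))
    (ε : ℝ) (hε : 0 ≤ ε)
    (hcon : ∀ iX iY iZ : ℤ, iX ∈ Finset.Icc (-2 : ℤ) (n-1) →
      iY ∈ Finset.Icc (-2 : ℤ) (n-1) → iZ ∈ Finset.Icc (-2 : ℤ) (n-1) →
      ((Set.Ioo ((iX : ℝ)/n) (((iX : ℝ)+3)/n) ×ˢ
        (Set.Ioo ((iY : ℝ)/n) (((iY : ℝ)+3)/n) ×ˢ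
         Set.Ioo ((iZ : ℝ)/n) (((iZ : ℝ)+3)/n))) ∩ M).Nonempty →
      |(n : ℝ) * (φX iX iY iZ - φX (iX - 1) iY iZ) +
       (n : ℝ) * (φY iX iY iZ - φY iX (iY - 1) iZ) +
       (n : ℝ) * (φZ iX iY iZ - φZ iX iY (iZ - 1))| ≤ ε) :
    ∀ m ∈ M, |divv n φX φY φZ m| ≤ ε :=
  lemma1_general n hn φX φY φZ M hMΩ ε hε hcon
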